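/- Fix a finite nonempty alphabet Σ equipped with a linear order and a fresh event tock ∉ Σ; work with finite linear observations over Σ ∪ {tock}. A discrete timed failure over Σ is a sequence (s₀, X₀, tock, s₁, X₁, tock, …, s_{n-1}, X_{n-1}, tock, sₙ, Xₙ) where each sᵢ ∈ Σ* and each Xᵢ for i < n is a subset of Σ, while Xₙ is a subset of Σ or the symbol •. Define the relation D_Σ, relating a finite linear observation ⟨A₀,a₁,A₁,…,a_m,A_m⟩ over Σ ∪ {tock} to every discrete timed failure obtained as follows: the events a₁,…,a_m, split at the occurrences of tock, yield the blocks s₀,…,sₙ (which contain no tock); for each occurrence of tock, the refusal recorded before it is any X ⊆ Σ \ A if the annotation A immediately preceding that tock is a set, and any X ⊆ Σ if that annotation is •; and the final refusal Xₙ is any X ⊆ Σ \ A_m if A_m ≠ • and is • if A_m = •. Encode observations by the canonical encoding φ over Ξ := (Σ ∪ {tock}) ⊕ Σ'' ⊕ Sym, and encode discrete timed failures over Θ := (Σ ∪ {tock}) ⊕ Σ' ⊕ Sym by ψ(s₀,X₀,tock,…,sₙ,Xₙ) = s₀ enc(X₀) tock s₁ enc(X₁) tock … sₙ enc(Xₙ),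 where enc(•) is the empty word and enc(X) is the symbol ⟨ followed by the primed copies of the elements of X in increasing order followed by the symbol ⟩. Then there exists a nondeterministic finite automaton with finitely many states over the alphabet Ξ ⊕ Θ recognising the relation {(φ(x), ψ(y)) : (x, y) ∈ D_Σ}. -/

import Mathlib

/-- A finite linear observation over alphabet `α`: an initial annotation `A₀`
(`none` = `•`, `some A` = a stable acceptance set) together with a list of pairs
`(aᵢ, Aᵢ)` of an event and the following annotation. -/
abbrev FLObs (α : Type) := Option (Finset α) × List (α × Option (Finset α))

/-- Extension on annotations: either they are equal or the first is `•`. -/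
def optExt {α : Type} (A B : Option (Finset α)) : Prop := A = B ∨ A = none

/-- The extension order on finite linear observations. -/
def extLE {α : Type} (u v : FLObs α) : Prop :=
  optExt u.1 v.1 ∧ u.2.length ≤ v.2.length ∧
    ∀ (i : ℕ) (hi : i < u.2.length) (hj : i < v.2.length),
      (u.2.get ⟨i, hi⟩).1 = (v.2.get ⟨i, hj⟩).1 ∧
        optExt (u.2.get ⟨i, hi⟩).2 (v.2.get ⟨i, hj⟩).2

/-- The four symbols `⟨`, `⟩`, `,`, `•` used by the canonical encoding. -/
inductive MSym : Type
  | lang | rang | comma | bullet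
deriving DecidableEq

instance : Fintype MSym where
  elems := {MSym.lang, MSym.rang, MSym.comma, MSym.bullet}
  complete := fun x => by cases x <;> simp

/-- The alphabet `Ξ = Σ ⊕ Σ'' ⊕ MSym` of the canonical encoding: `Sum.inl a` is the
event `a`, `Sum.inr (Sum.inl a)` is the double-primed copy `a''`, and
`Sum.inr (Sum.inr s)` is a symbol. -/
abbrev Xi (α : Type) := α ⊕ α ⊕ MSym

/-- Encoding of an annotation: `•` is the symbol `•`, a set is the list of the
double-primed copies of its elements in increasing order. -/
def encAnnXi {α : Type} [LinearOrder α] : Option (Finset α) → List (Xi α)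
  | none => [Sum.inr (Sum.inr MSym.bullet)]
  | some A => (A.sort (· ≤ ·)).map (fun a => Sum.inr (Sum.inl a))

/-- The canonical encoding `φ` of finite linear observations: the observation
`⟨A₀, a₁, A₁, …, aₙ, Aₙ⟩` is written as the string `⟨ A₀ , a₁ , A₁ , … , aₙ , Aₙ ⟩`. -/
def phi {α : Type} [LinearOrder α] (u : FLObs α) : List (Xi α) :=
  [Sum.inr (Sum.inr MSym.lang)] ++ encAnnXi u.1 ++
    (u.2.map (fun p => [Sum.inr (Sum.inr MSym.comma), Sum.inl p.1,
      Sum.inr (Sum.inr MSym.comma)] ++ encAnnXi p.2)).flatten ++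
    [Sum.inr (Sum.inr MSym.rang)]

/-- An NFA over `α ⊕ β` recognises a relation `R ⊆ α* × β*` if `R s t` holds exactly
when the NFA accepts some interleaving of `s` (as left letters) and `t` (as right
letters). -/
def Recognises {α β Q : Type} (A : NFA (α ⊕ β) Q) (R : List α → List β → Prop) : Prop :=
  ∀ (s : List α) (t : List β),
    R s t ↔ ∃ w ∈ A.accepts, w.filterMap Sum.getLeft? = s ∧ w.filterMap Sum.getRight? = t

/-- The relation on `O` induced by a relation `M : S → O → Prop` from a preorder
`le` on `S`. -/
def inducedRel {S O : Type} (le : S → S → Prop) (M : S → O → Prop) (y₁ y₂ : O) : Prop :=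
  ∀ b, M b y₂ → ∃ a, M a y₁ ∧ le a b

/-- The final annotation `Aₙ` of an observation. -/
def lastAnn {α : Type} (u : FLObs α) : Option (Finset α) :=
  match u.2.getLast? with
  | none => u.1
  | some p => p.2


/-- The alphabet `Σ ∪ {tock}`: we use `WithBot α`, with `⊥` playing the role of the
fresh event `tock` and `(a : WithBot α)` the event `a ∈ Σ`. -/
abbrev Tocked (α : Type) := WithBot α

/-- The annotation reached after reading the items of `l`, starting from `prev`:
the annotation of the last item of `l`, or `prev` if `l` is empty. -/
def lastAnnFrom {γ : Type} (prev : Option (Finset γ)) (l : List (γ × Option (Finset γ))) :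
    Option (Finset γ) :=
  match l.getLast? with
  | none => prev
  | some p => p.2

/-- Compatibility of the final refusal of a discrete timed failure with the final
annotation of the observation: if the annotation is `•` the refusal is `•`; if the
annotation is an acceptance set `A` then the refusal is a set `X ⊆ Σ \ A`. -/
def annCompatD {α : Type} (A : Option (Finset (Tocked α))) (X : Option (Finset α)) : Prop :=
  match A, X with
  | none, none => True
  | some A, some Y => ∀ a ∈ Y, (a : Tocked α) ∉ A
  | _, _ => False

/-- Compatibility of a refusal recorded before a `tock` with the annotation `A`
immediately preceding that `tock`: any `X ⊆ Σ \ A` if `A` is a set, and any `X ⊆ Σ`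
if `A = •`. -/
def refCompatD {α : Type} (A : Option (Finset (Tocked α))) (X : Finset α) : Prop :=
  match A with
  | none => True
  | some S => ∀ a ∈ X, (a : Tocked α) ∉ S

/-- A discrete timed failure `(s₀, X₀, tock, s₁, X₁, tock, …, sₙ, Xₙ)` over `Σ`:
the list of blocks `(sᵢ, Xᵢ)` (`i < n`, each `sᵢ ∈ Σ*` and `Xᵢ ⊆ Σ`) followed by the
final block `sₙ` and final refusal `Xₙ ⊆ Σ` or `•` (`none`). -/
abbrev DTF (α : Type) := List (List α × Finset α) × (List α × Option (Finset α))

/-- The relation `D_Σ`, relating a finite linear observation over `Σ ∪ {tock}`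
(split as an initial annotation `prev` and a list of items `l`) to a discrete timed
failure: the events, split at the occurrences of `tock`, yield the blocks
`s₀, …, sₙ` (containing no `tock`); the refusal recorded before each `tock` is any
`X ⊆ Σ \ A` where `A` is the annotation immediately preceding that `tock` (any
`X ⊆ Σ` if `A = •`); and the final refusal is any `X ⊆ Σ \ A_m` if the final
annotation `A_m ≠ •`, and is `•` if `A_m = •`. -/
inductive DTFRel {α : Type} :
    Option (Finset (Tocked α)) → List (Tocked α × Option (Finset (Tocked α))) →
      DTF α → Prop
  | last (prev : Option (Finset (Tocked α)))
      (l : List (Tocked α × Option (Finset (Tocked α))))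
      (s : List α) (X : Option (Finset α))
      (hev : l.map Prod.fst = s.map (fun a => (a : Tocked α)))
      (hX : annCompatD (lastAnnFrom prev l) X) :
      DTFRel prev l ([], (s, X))
  | step (prev : Option (Finset (Tocked α)))
      (l₁ : List (Tocked α × Option (Finset (Tocked α))))
      (At : Option (Finset (Tocked α)))
      (l₂ : List (Tocked α × Option (Finset (Tocked α))))
      (s : List α) (X : Finset α) (rest : List (List α × Finset α))
      (fin : List α × Option (Finset α))
      (hev : l₁.map Prod.fst = s.map (fun a => (a : Tocked α)))
      (hX : refCompatD (lastAnnFrom prev l₁) X)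
      (hrec : DTFRel At l₂ (rest, fin)) :
      DTFRel prev (l₁ ++ ((⊥ : Tocked α), At) :: l₂) ((s, X) :: rest, fin)

/-- The output alphabet `Θ = (Σ ∪ {tock}) ⊕ Σ' ⊕ Sym` for discrete timed failures. -/
abbrev ThetaD (α : Type) := Tocked α ⊕ α ⊕ MSym

/-- `enc X`: the symbol `⟨` followed by the primed copies of the elements of `X` in
increasing order followed by the symbol `⟩`. -/
def encRefD {α : Type} [LinearOrder α] (X : Finset α) : List (ThetaD α) :=
  [Sum.inr (Sum.inr MSym.lang)] ++
    (X.sort (· ≤ ·)).map (fun a => Sum.inr (Sum.inl a)) ++ [Sum.inr (Sum.inr MSym.rang)]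

/-- The output encoding of a discrete timed failure:
`ψ (s₀, X₀, tock, …, sₙ, Xₙ) = s₀ enc(X₀) tock s₁ enc(X₁) tock … sₙ enc(Xₙ)`,
where `enc (•)` is the empty word. -/
def psiD {α : Type} [LinearOrder α] (y : DTF α) : List (ThetaD α) :=
  (y.1.map (fun p => p.1.map (fun a => Sum.inl (a : Tocked α)) ++ encRefD p.2 ++
      [Sum.inl (⊥ : Tocked α)])).flatten ++
    y.2.1.map (fun a => Sum.inl (a : Tocked α)) ++
    (match y.2.2 with
     | none => []
     | some X => encRefD X)

/-!
Cut a related pair `(x, y) ∈ D_Σ` into blocks: the opening `⟨ A₀`, one block per event `aᵢ` with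
its annotation `Aᵢ` (a `tock` block also carrying the refusal recorded before it), and the closing
`⟩` with the final refusal. Each block contributes a fixed pair of words to `φ x` and `ψ y`, and
the only constraint linking blocks is that a refusal avoids the annotation just before it, which an
automaton on blocks checks by remembering the last annotation. As `Σ` is finite there are finitely
many blocks, so replacing each block by its pair of words, interleaved, gives a finite automaton
over `Ξ ⊕ Θ`.
-/

namespace NFA

variable {T σ : Type} (M : NFA T σ)

theorem mem_acceptsFrom_iff_exists_singleton {S : Set σ} {x : List T} :
    x ∈ M.acceptsFrom S ↔ ∃ s ∈ S, x ∈ M.acceptsFrom {s} := by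
  simp only [mem_acceptsFrom, mem_evalFrom_iff_exists (S := S)]
  tauto

theorem cons_mem_acceptsFrom_singleton {s : σ} {a : T} {x : List T} :
    a :: x ∈ M.acceptsFrom {s} ↔ ∃ s' ∈ M.step s a, x ∈ M.acceptsFrom {s'} := by
  rw [cons_mem_acceptsFrom, stepSet_singleton, mem_acceptsFrom_iff_exists_singleton]

theorem mem_accepts_iff_exists_start {x : List T} :
    x ∈ M.accepts ↔ ∃ s ∈ M.start, x ∈ M.acceptsFrom {s} := by
  rw [accepts_eq_acceptsFrom_start, mem_acceptsFrom_iff_exists_singleton]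

theorem exists_fin_accepts_eq [Finite σ] : ∃ (n : ℕ) (A : NFA T (Fin n)), A.accepts = M.accepts :=
  ⟨_, (DFA.reindex (Finite.equivFin (Set σ)) M.toDFA).toNFA, by simp⟩

end NFA

section BlockSubstitution

variable {Γ σ T : Type} (M : NFA Γ σ) (h : Γ → List T)

def IsBlockRest (r : List T) : Prop := r = [] ∨ ∃ γ, r <:+ h γ

def BlockRest : Type := {r : List T // IsBlockRest h r}

instance [Finite Γ] : Finite (BlockRest h) := by
  have hfin : ({[]} ∪ ⋃ γ, {r | r ∈ (h γ).tails}).Finite :=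
    (Set.finite_singleton []).union (Set.finite_iUnion fun γ => (h γ).tails.finite_toSet)
  have hset : {r | IsBlockRest h r} = {[]} ∪ ⋃ γ, {r | r ∈ (h γ).tails} := by
    ext; simp [IsBlockRest]
  exact (hset ▸ hfin).to_subtype

variable {h} in
theorem IsBlockRest.of_cons {t : T} {r : List T} (hr : IsBlockRest h (t :: r)) :
    IsBlockRest h r := by
  obtain ⟨γ, hγ⟩ := hr.resolve_left (List.cons_ne_nil _ _)
  exact Or.inr ⟨γ, (List.suffix_cons _ _).trans hγ⟩

def BlockRest.nil : BlockRest h := ⟨[], Or.inl rfl⟩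

/-- An automaton reading `(g.map h).flatten` for the words `g` accepted by `M`: in state `(q, r)`,
`M` is in state `q` and the letters `r` of the current block are still to be read. -/
def NFA.substitute : NFA T (σ × BlockRest h) where
  step p t := {p' | (p.2.1 = t :: p'.2.1 ∧ p'.1 = p.1) ∨
    (p.2.1 = [] ∧ ∃ γ, p'.1 ∈ M.step p.1 γ ∧ h γ = t :: p'.2.1)}
  start := {p | p.1 ∈ M.start ∧ p.2.1 = []}
  accept := {p | p.1 ∈ M.accept ∧ p.2.1 = []}

variable {M h}

theorem NFA.exists_of_mem_substitute_acceptsFrom {w : List T} {p : σ × BlockRest h}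
    (hw : w ∈ (M.substitute h).acceptsFrom {p}) :
    ∃ g ∈ M.acceptsFrom {p.1}, w = p.2.1 ++ (g.map h).flatten := by
  induction w generalizing p with
  | nil =>
    obtain ⟨hq, hr⟩ : p.1 ∈ M.accept ∧ p.2.1 = [] := by simpa [NFA.substitute] using hw
    exact ⟨[], by simpa using hq, by simp [hr]⟩
  | cons t w ih =>
    obtain ⟨p', hstep, hw⟩ := (NFA.cons_mem_acceptsFrom_singleton _).1 hw
    obtain ⟨g, hg, rfl⟩ := ih hw
    rcases hstep with ⟨hr, hq⟩ | ⟨hr, γ, hq, hγ⟩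
    · exact ⟨g, hq ▸ hg, by simp [hr]⟩
    · exact ⟨γ :: g, (NFA.cons_mem_acceptsFrom_singleton _).2 ⟨_, hq, hg⟩, by simp [hr, hγ]⟩

theorem NFA.append_mem_substitute_acceptsFrom {q : σ} {w : List T}
    (hw : w ∈ (M.substitute h).acceptsFrom {(q, BlockRest.nil h)}) (r : List T)
    (hr : IsBlockRest h r) :
    r ++ w ∈ (M.substitute h).acceptsFrom {(q, ⟨r, hr⟩)} := by
  induction r with
  | nil => exact hw
  | cons t r ih =>
    exact (NFA.cons_mem_acceptsFrom_singleton _).2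
      ⟨(q, ⟨r, hr.of_cons⟩), Or.inl ⟨rfl, rfl⟩, ih hr.of_cons⟩

theorem NFA.flatten_map_mem_substitute_acceptsFrom (hne : ∀ γ, h γ ≠ []) {q : σ}
    {g : List Γ} (hg : g ∈ M.acceptsFrom {q}) :
    (g.map h).flatten ∈ (M.substitute h).acceptsFrom {(q, BlockRest.nil h)} := by
  induction g generalizing q with
  | nil => simpa [NFA.substitute, BlockRest.nil] using hg
  | cons γ g ih =>
    obtain ⟨q', hq', hg⟩ := (NFA.cons_mem_acceptsFrom_singleton _).1 hg
    obtain ⟨t, r, hγ⟩ := List.exists_cons_of_ne_nil (hne γ)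
    have hr : IsBlockRest h r :=
      (show IsBlockRest h (t :: r) from Or.inr ⟨γ, hγ ▸ List.suffix_rfl⟩).of_cons
    rw [List.map_cons, List.flatten_cons, hγ, List.cons_append]
    exact (NFA.cons_mem_acceptsFrom_singleton _).2
      ⟨(q', ⟨r, hr⟩), Or.inr ⟨rfl, γ, hq', hγ⟩, NFA.append_mem_substitute_acceptsFrom (ih hg) r hr⟩

theorem NFA.substitute_accepts (hne : ∀ γ, h γ ≠ []) :
    (M.substitute h).accepts = {w | ∃ g ∈ M.accepts, w = (g.map h).flatten} := by
  ext w
  simp only [NFA.mem_accepts_iff_exists_start]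
  constructor
  · rintro ⟨⟨q, r, hr⟩, ⟨hq, rfl : r = []⟩, hw⟩
    obtain ⟨g, hg, rfl⟩ := NFA.exists_of_mem_substitute_acceptsFrom hw
    exact ⟨g, ⟨q, hq, hg⟩, rfl⟩
  · rintro ⟨g, ⟨q, hq, hg⟩, rfl⟩
    exact ⟨_, ⟨hq, rfl⟩, NFA.flatten_map_mem_substitute_acceptsFrom hne hg⟩

end BlockSubstitution

section
variable {Γ α β : Type} (l : Γ → List α) (r : Γ → List β) (g : List Γ)

theorem filterMap_getLeft_flatten_map :
    (g.map fun γ => (l γ).map Sum.inl ++ (r γ).map Sum.inr).flatten.filterMap Sum.getLeft? =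
      (g.map l).flatten := by
  simp [List.filterMap_flatten, Function.comp_def]

theorem filterMap_getRight_flatten_map :
    (g.map fun γ => (l γ).map Sum.inl ++ (r γ).map Sum.inr).flatten.filterMap Sum.getRight? =
      (g.map r).flatten := by
  simp [List.filterMap_flatten, Function.comp_def]

end

theorem exists_recognises_of_blocks {α β Γ σ : Type} [Finite Γ] [Finite σ] (M : NFA Γ σ)
    (l : Γ → List α) (r : Γ → List β) (hne : ∀ γ, l γ ≠ [] ∨ r γ ≠ []) :
    ∃ (n : ℕ) (A : NFA (α ⊕ β) (Fin n)), Recognises A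
      (fun s t => ∃ g ∈ M.accepts, (g.map l).flatten = s ∧ (g.map r).flatten = t) := by
  set h : Γ → List (α ⊕ β) := fun γ => (l γ).map Sum.inl ++ (r γ).map Sum.inr
  have hne' : ∀ γ, h γ ≠ [] := fun γ => by
    rcases hne γ with hγ | hγ <;> simp [h, hγ]
  obtain ⟨n, A, hA⟩ := (M.substitute h).exists_fin_accepts_eq
  refine ⟨n, A, fun s t => ?_⟩
  rw [hA, NFA.substitute_accepts hne']
  constructor
  · rintro ⟨g, hg, rfl, rfl⟩
    exact ⟨_, ⟨g, hg, rfl⟩, filterMap_getLeft_flatten_map l r g,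
      filterMap_getRight_flatten_map l r g⟩
  · rintro ⟨_, ⟨g, hg, rfl⟩, rfl, rfl⟩
    exact ⟨g, hg, (filterMap_getLeft_flatten_map l r g).symm,
      (filterMap_getRight_flatten_map l r g).symm⟩

section DiscreteTimedFailures

variable {α : Type}

def DTF.consEvent (b : α) : DTF α → DTF α
  | ([], (s, X)) => ([], (b :: s, X))
  | ((s, X) :: rest, fin) => ((b :: s, X) :: rest, fin)

def DTF.consTock (X : Finset α) (y : DTF α) : DTF α := (([], X) :: y.1, y.2)

theorem lastAnnFrom_cons {γ : Type} (prev A : Option (Finset γ)) (a : γ)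
    (l : List (γ × Option (Finset γ))) :
    lastAnnFrom prev ((a, A) :: l) = lastAnnFrom A l := by
  cases l <;> simp [lastAnnFrom, List.getLast?_cons]

-- `DTFRel` writes `s.map (fun a => (a : Tocked α))`, which elaborates as a map over the monadic
-- coercion of `s` to `List (Tocked α)`; this lemma brings it into a form the list API understands.
theorem map_coe_eq_map_some (s : List α) :
    s.map (fun a => (a : Tocked α)) = s.map WithBot.some := by
  induction s with
  | nil => rfl
  | cons b s ih => exact congrArg (List.cons (b : Tocked α)) ih

theorem DTFRel.nil_iff {A : Option (Finset (Tocked α))} {y : DTF α} :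
    DTFRel A [] y ↔ ∃ X, annCompatD A X ∧ y = ([], ([], X)) := by
  constructor
  · generalize hl : ([] : List (Tocked α × Option (Finset (Tocked α)))) = l
    rintro (⟨_, _, s, X, hev, hX⟩ | ⟨_, l₁, _, _, _, _, _, _, _, _, _⟩)
    · subst hl
      rw [map_coe_eq_map_some] at hev
      obtain rfl : s = [] := List.map_eq_nil_iff.1 hev.symm
      exact ⟨X, hX, rfl⟩
    · simp at hl
  · rintro ⟨X, hX, rfl⟩
    exact DTFRel.last A [] [] X rfl hX

theorem DTFRel.consEvent {A A' : Option (Finset (Tocked α))} {l} {y : DTF α}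
    (h : DTFRel A' l y) (b : α) : DTFRel A (((b : Tocked α), A') :: l) (DTF.consEvent b y) := by
  cases h with
  | last _ _ s X hev hX =>
    exact DTFRel.last A _ (b :: s) X (by simp [hev]) (by rwa [lastAnnFrom_cons])
  | step _ l₁ At l₂ s X rest fin hev hX hrec =>
    exact DTFRel.step A ((b, A') :: l₁) At l₂ (b :: s) X rest fin (by simp [hev])
      (by rwa [lastAnnFrom_cons]) hrec

theorem DTFRel.cons_iff {A A' : Option (Finset (Tocked α))} {a : Tocked α} {l} {y : DTF α} :
    DTFRel A ((a, A') :: l) y ↔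
      (∃ (b : α) (y' : DTF α), a = b ∧ DTFRel A' l y' ∧ y = DTF.consEvent b y') ∨
      (∃ X y', a = ⊥ ∧ refCompatD A X ∧ DTFRel A' l y' ∧ y = DTF.consTock X y') := by
  constructor
  · generalize hl : (a, A') :: l = l₀
    rintro (⟨_, _, s, X, hev, hX⟩ | ⟨_, l₁, At, l₂, s, X, rest, fin, hev, hX, hrec⟩)
    · subst hl
      rw [map_coe_eq_map_some, List.map_cons, eq_comm, List.map_eq_cons_iff] at hev
      obtain ⟨b, s, rfl, rfl, hev⟩ := hev
      rw [lastAnnFrom_cons] at hX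
      exact Or.inl ⟨b, ([], (s, X)), rfl,
        DTFRel.last A' l s X (by rw [map_coe_eq_map_some, hev]) hX, rfl⟩
    · obtain _ | ⟨p, l₁⟩ := l₁
      · simp only [List.nil_append, List.cons.injEq, Prod.mk.injEq] at hl
        obtain ⟨⟨rfl, rfl⟩, rfl⟩ := hl
        rw [map_coe_eq_map_some] at hev
        obtain rfl : s = [] := List.map_eq_nil_iff.1 hev.symm
        exact Or.inr ⟨X, (rest, fin), rfl, hX, hrec, rfl⟩
      · simp only [List.cons_append, List.cons.injEq] at hl
        obtain ⟨rfl, rfl⟩ := hl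
        rw [map_coe_eq_map_some, List.map_cons, eq_comm, List.map_eq_cons_iff] at hev
        obtain ⟨b, s, rfl, rfl, hev⟩ := hev
        rw [lastAnnFrom_cons] at hX
        exact Or.inl ⟨b, ((s, X) :: rest, fin), rfl,
          DTFRel.step A' l₁ At l₂ s X rest fin (by rw [map_coe_eq_map_some, hev]) hX hrec, rfl⟩
  · rintro (⟨b, y', rfl, h, rfl⟩ | ⟨X, ⟨rest, fin⟩, rfl, hX, h, rfl⟩)
    · exact h.consEvent b
    · exact DTFRel.step A [] A' l [] X rest fin rfl hX h

inductive Block (α : Type)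
  | opening (A : Option (Finset (Tocked α)))
  | event (a : α) (A : Option (Finset (Tocked α)))
  | tock (X : Finset α) (A : Option (Finset (Tocked α)))
  | closing (X : Option (Finset α))
deriving Fintype

inductive BlockState (α : Type)
  | start
  | ann (A : Option (Finset (Tocked α)))
  | done
deriving Fintype

/-- In state `ann A`, `A` is the last annotation read: the only information the next refusal
depends on. -/
def blockNFA : NFA (Block α) (BlockState α) where
  step
    | .start, .opening A => {.ann A}
    | .ann _, .event _ A' => {.ann A'}
    | .ann A, .tock X A' => {q | refCompatD A X ∧ q = .ann A'}
    | .ann A, .closing X => {q | annCompatD A X ∧ q = .done}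
    | _, _ => ∅
  start := {.start}
  accept := {.done}

theorem eq_nil_of_mem_blockNFA_acceptsFrom_done {g : List (Block α)}
    (hg : g ∈ blockNFA.acceptsFrom {BlockState.done}) : g = [] := by
  obtain _ | ⟨γ, g⟩ := g
  · rfl
  obtain ⟨q, hq, -⟩ := (NFA.cons_mem_acceptsFrom_singleton _).1 hg
  cases γ <;> simp [blockNFA] at hq

theorem mem_blockNFA_accepts_iff {g : List (Block α)} :
    g ∈ blockNFA.accepts ↔
      ∃ A g', g = .opening A :: g' ∧ g' ∈ blockNFA.acceptsFrom {BlockState.ann A} := by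
  change g ∈ blockNFA.acceptsFrom {BlockState.start} ↔ _
  obtain _ | ⟨γ, g⟩ := g
  · simp [blockNFA]
  rw [NFA.cons_mem_acceptsFrom_singleton]
  cases γ <;> simp [blockNFA]

variable [LinearOrder α]

theorem psiD_consEvent (b : α) (y : DTF α) :
    psiD (DTF.consEvent b y) = Sum.inl (b : Tocked α) :: psiD y := by
  obtain ⟨_ | ⟨⟨s, X⟩, rest⟩, s', X'⟩ := y <;> simp [DTF.consEvent, psiD]

theorem psiD_consTock (X : Finset α) (y : DTF α) :
    psiD (DTF.consTock X y) = encRefD X ++ Sum.inl ⊥ :: psiD y := by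
  simp [DTF.consTock, psiD]

def obsItem (p : Tocked α × Option (Finset (Tocked α))) : List (Xi (Tocked α)) :=
  [Sum.inr (Sum.inr MSym.comma), Sum.inl p.1, Sum.inr (Sum.inr MSym.comma)] ++ encAnnXi p.2

theorem phi_eq (x : FLObs (Tocked α)) :
    phi x = Sum.inr (Sum.inr MSym.lang) :: encAnnXi x.1 ++ (x.2.map obsItem).flatten ++
      [Sum.inr (Sum.inr MSym.rang)] := rfl

def Block.obs : Block α → List (Xi (Tocked α))
  | .opening A => Sum.inr (Sum.inr MSym.lang) :: encAnnXi A
  | .event a A => obsItem ((a : Tocked α), A)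
  | .tock _ A => obsItem (⊥, A)
  | .closing _ => [Sum.inr (Sum.inr MSym.rang)]

def Block.failure : Block α → List (ThetaD α)
  | .opening _ => []
  | .event a _ => [Sum.inl (a : Tocked α)]
  | .tock X _ => encRefD X ++ [Sum.inl ⊥]
  | .closing X => psiD ([], ([], X))

theorem Block.obs_ne_nil (γ : Block α) : γ.obs ≠ [] := by
  cases γ <;> simp [Block.obs, obsItem]

theorem exists_dtfRel_of_mem_blockNFA_acceptsFrom {A : Option (Finset (Tocked α))}
    {g : List (Block α)} (hg : g ∈ blockNFA.acceptsFrom {BlockState.ann A}) :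
    ∃ l y, DTFRel A l y ∧
      (g.map Block.obs).flatten = (l.map obsItem).flatten ++ [Sum.inr (Sum.inr MSym.rang)] ∧
      (g.map Block.failure).flatten = psiD y := by
  induction g generalizing A with
  | nil => simp [blockNFA] at hg
  | cons γ g ih =>
    obtain ⟨q, hq, hg⟩ := (NFA.cons_mem_acceptsFrom_singleton _).1 hg
    cases γ with
    | opening => simp [blockNFA] at hq
    | event b A' =>
      obtain rfl : q = .ann A' := hq
      obtain ⟨l, y, hrel, hobs, hfail⟩ := ih hg
      exact ⟨_ :: l, DTF.consEvent b y, DTFRel.cons_iff.2 (Or.inl ⟨b, y, rfl, hrel, rfl⟩),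
        by simp [Block.obs, hobs], by simp [Block.failure, hfail, psiD_consEvent]⟩
    | tock X A' =>
      obtain ⟨hX, rfl⟩ := hq
      obtain ⟨l, y, hrel, hobs, hfail⟩ := ih hg
      exact ⟨_ :: l, DTF.consTock X y, DTFRel.cons_iff.2 (Or.inr ⟨X, y, rfl, hX, hrel, rfl⟩),
        by simp [Block.obs, hobs], by simp [Block.failure, hfail, psiD_consTock]⟩
    | closing X =>
      obtain ⟨hX, rfl⟩ := hq
      obtain rfl := eq_nil_of_mem_blockNFA_acceptsFrom_done hg
      exact ⟨[], _, DTFRel.nil_iff.2 ⟨X, hX, rfl⟩, by simp [Block.obs], by simp [Block.failure]⟩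

theorem exists_mem_blockNFA_acceptsFrom_of_dtfRel {A : Option (Finset (Tocked α))} {l}
    {y : DTF α} (h : DTFRel A l y) :
    ∃ g ∈ blockNFA.acceptsFrom {BlockState.ann A},
      (g.map Block.obs).flatten = (l.map obsItem).flatten ++ [Sum.inr (Sum.inr MSym.rang)] ∧
      (g.map Block.failure).flatten = psiD y := by
  induction l generalizing A y with
  | nil =>
    obtain ⟨X, hX, rfl⟩ := DTFRel.nil_iff.1 h
    refine ⟨[.closing X], ?_, by simp [Block.obs], by simp [Block.failure]⟩
    exact (NFA.cons_mem_acceptsFrom_singleton _).2 ⟨.done, ⟨hX, rfl⟩, by simp [blockNFA]⟩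
  | cons p l ih =>
    obtain ⟨a, A'⟩ := p
    rcases DTFRel.cons_iff.1 h with ⟨b, y, rfl, h', rfl⟩ | ⟨X, y, rfl, hX, h', rfl⟩
    · obtain ⟨g, hg, hobs, hfail⟩ := ih h'
      refine ⟨.event b A' :: g, (NFA.cons_mem_acceptsFrom_singleton _).2 ⟨_, rfl, hg⟩,
        by simp [Block.obs, hobs], by simp [Block.failure, hfail, psiD_consEvent]⟩
    · obtain ⟨g, hg, hobs, hfail⟩ := ih h'
      refine ⟨.tock X A' :: g, (NFA.cons_mem_acceptsFrom_singleton _).2 ⟨_, ⟨hX, rfl⟩, hg⟩,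
        by simp [Block.obs, hobs], by simp [Block.failure, hfail, psiD_consTock]⟩

theorem dtfRel_iff_exists_mem_blockNFA_accepts {s : List (Xi (Tocked α))}
    {t : List (ThetaD α)} :
    (∃ (x : FLObs (Tocked α)) (y : DTF α), s = phi x ∧ t = psiD y ∧ DTFRel x.1 x.2 y) ↔
      ∃ g ∈ blockNFA.accepts, (g.map Block.obs).flatten = s ∧ (g.map Block.failure).flatten = t := by
  constructor
  · rintro ⟨⟨A, l⟩, y, rfl, rfl, h⟩
    obtain ⟨g, hg, hobs, hfail⟩ := exists_mem_blockNFA_acceptsFrom_of_dtfRel h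
    exact ⟨.opening A :: g, mem_blockNFA_accepts_iff.2 ⟨A, g, rfl, hg⟩,
      by simp [Block.obs, hobs, phi_eq], by simp [Block.failure, hfail]⟩
  · rintro ⟨g, hg, rfl, rfl⟩
    obtain ⟨A, g, rfl, hg'⟩ := mem_blockNFA_accepts_iff.1 hg
    obtain ⟨l, y, h, hobs, hfail⟩ := exists_dtfRel_of_mem_blockNFA_acceptsFrom hg'
    exact ⟨(A, l), y, by simp [Block.obs, hobs, phi_eq], by simp [Block.failure, hfail], h⟩

end DiscreteTimedFailures

theorem stmt14_general {α : Type} [Fintype α] [LinearOrder α] :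
    ∃ (n : ℕ) (A : NFA (Xi (Tocked α) ⊕ ThetaD α) (Fin n)),
      Recognises A (fun s t => ∃ (x : FLObs (Tocked α)) (y : DTF α),
        s = phi x ∧ t = psiD y ∧ DTFRel x.1 x.2 y) := by
  obtain ⟨n, A, hA⟩ := exists_recognises_of_blocks (blockNFA (α := α)) Block.obs Block.failure
    fun γ => Or.inl γ.obs_ne_nil
  exact ⟨n, A, fun s t => dtfRel_iff_exists_mem_blockNFA_accepts.trans (hA s t)⟩

/-- The discrete timed failures model `D` is rational: there is an NFA with finitely
many states over `Ξ ⊕ Θ` recognising `{(φ x, ψ y) : (x, y) ∈ D_Σ}`, where `φ` is the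
canonical encoding of finite linear observations over `Σ ∪ {tock}`. -/
theorem stmt14 {α : Type} [Fintype α] [Nonempty α] [LinearOrder α] :
    ∃ (n : ℕ) (A : NFA (Xi (Tocked α) ⊕ ThetaD α) (Fin n)),
      Recognises A (fun s t => ∃ (x : FLObs (Tocked α)) (y : DTF α),
        s = phi x ∧ t = psiD y ∧ DTFRel x.1 x.2 y) :=
  stmt14_general
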